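/- arXiv:2112.00574 — 2 statements merged into one kernel-verified Lean document; each statement's English description precedes it below -/
import Mathlib

section
/- Let A be a finite agenda with m = |A|, and define σbal(B) = {(a, true) | a ∈ B} ∪ {(a, false) | a ∈ A} and σout(C) = {(a, true) | a ∈ C} ∪ {(a, false) | a ∈ C} as finite subsets of A × Bool. Then for all B, C ⊆ A, the agreement of σbal(B) and σout(C) over A × Bool equals (m − |B|) + 2·|B ∩ C|. Consequently, for every profile B : Fin n → Finset A and nonempty finite feasible set F, an outcome C ∈ F maximizes ∑ᵢ |Bᵢ ∩ C| over F if and only if C maximizes ∑ᵢ agree(σbal(Bᵢ), σout(C)) over F. Hence the sum rule with the simple set scoring is an instance of the median rule under the translation with auxiliary issues (Lemma 1(i), reverse direction). -/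
/-- The agreement of two finite subsets of a finite type `K`:
the number of elements on which they coincide. -/
def agree {K : Type*} [Fintype K] [DecidableEq K] (X Y : Finset K) : ℕ :=
  (Finset.univ.filter (fun k => k ∈ X ↔ k ∈ Y)).card

/-- The ballot translation `σbal(B) = {(a, true) | a ∈ B} ∪ {(a, false) | a ∈ A}`. -/
def sigBal {A : Type*} [Fintype A] [DecidableEq A] (B : Finset A) : Finset (A × Bool) :=
  Finset.univ.filter (fun p => if p.2 then p.1 ∈ B else True)

/-- The outcome translation `σout(C) = {(a, true) | a ∈ C} ∪ {(a, false) | a ∈ C}`. -/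
def sigOut {A : Type*} [Fintype A] [DecidableEq A] (C : Finset A) : Finset (A × Bool) :=
  Finset.univ.filter (fun p => p.1 ∈ C)

theorem agree_sig {A : Type*} [Fintype A] [DecidableEq A] (B C : Finset A) :
    agree (sigBal B) (sigOut C) = (Fintype.card A - B.card) + 2 * (B ∩ C).card := by
  classical
  have h1 : agree (sigBal B) (sigOut C) =
      ∑ p : A × Bool, (if ((if p.2 then p.1 ∈ B else True) ↔ p.1 ∈ C) then 1 else 0) := by
    simp only [agree, Finset.card_filter, sigBal, sigOut, Finset.mem_filter,
      Finset.mem_univ, true_and]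
  rw [h1, Fintype.sum_prod_type]
  have h2 : ∀ a : A, (∑ b : Bool, (if ((if b then a ∈ B else True) ↔ a ∈ C) then 1 else 0))
      = (if (a ∈ B ↔ a ∈ C) then 1 else 0) + (if a ∈ C then 1 else 0) := by
    intro a
    by_cases hB : a ∈ B <;> by_cases hC : a ∈ C <;> simp [hB, hC]
  simp only [h2]
  rw [Finset.sum_add_distrib]
  have h3 : (∑ a : A, if (a ∈ B ↔ a ∈ C) then 1 else 0)
      = (B ∩ C).card + (Bᶜ ∩ Cᶜ).card := by
    rw [← Finset.card_filter]
    rw [← Finset.card_union_of_disjoint]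
    · congr 1
      ext a
      simp [Finset.mem_filter, iff_iff_implies_and_implies]
      tauto
    · intro S hS hS' a ha
      have := hS ha; have := hS' ha
      simp_all
  have h4 : (∑ a : A, if a ∈ C then 1 else 0) = C.card := by
    rw [← Finset.card_filter]; simp [Finset.filter_mem_eq_inter]
  rw [h3, h4]
  have h5 : (Bᶜ ∩ Cᶜ).card = Fintype.card A - (B ∪ C).card := by
    rw [← Finset.compl_union, Finset.card_compl]
  have h6 : (B ∪ C).card + (B ∩ C).card = B.card + C.card :=
    Finset.card_union_add_card_inter B C
  have hBle : B.card ≤ Fintype.card A := Finset.card_le_univ B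
  have hUle : (B ∪ C).card ≤ Fintype.card A := Finset.card_le_univ _
  have hIC : (B ∩ C).card ≤ C.card := Finset.card_le_card Finset.inter_subset_right
  omega

/-- Lemma 1(i), reverse direction: `agree(σbal(B), σout(C)) = (m - |B|) + 2|B ∩ C|`,
and consequently an outcome `C ∈ F` maximizes the total simple score over `F` iff it
maximizes the total agreement of the translated ballots and outcome; the sum rule with
the simple set scoring is an instance of the median rule. -/
theorem sum_simple_instance_of_median {A : Type*} [Fintype A] [DecidableEq A]
    (m : ℕ) (hm : Fintype.card A = m) :
    (∀ B C : Finset A,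
      agree (sigBal B) (sigOut C) = (m - B.card) + 2 * (B ∩ C).card) ∧
    (∀ (n : ℕ) (B : Fin n → Finset A) (F : Finset (Finset A)), F.Nonempty →
      ∀ C ∈ F,
        ((∀ D ∈ F, ∑ i, (B i ∩ D).card ≤ ∑ i, (B i ∩ C).card) ↔
         (∀ D ∈ F, ∑ i, agree (sigBal (B i)) (sigOut D) ≤
            ∑ i, agree (sigBal (B i)) (sigOut C)))) := by
  constructor
  · intro B C
    rw [agree_sig B C, hm]
  · intro n B F _ C _
    have hsum : ∀ D : Finset A,
        ∑ i, agree (sigBal (B i)) (sigOut D)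
          = (∑ i, (m - (B i).card)) + 2 * ∑ i, (B i ∩ D).card := by
      intro D
      rw [Finset.mul_sum, ← Finset.sum_add_distrib]
      refine Finset.sum_congr rfl fun i _ => ?_
      rw [agree_sig, hm]
    constructor
    · intro h D hD
      rw [hsum D, hsum C]
      have := h D hD
      omega
    · intro h D hD
      have := h D hD
      rw [hsum D, hsum C] at this
      omega
end

section
/- Let A be a finite agenda with costs w : A → ℕ and budget limit ℓ : ℕ, and let F_ℓ = {C ∈ Finset A | ∑_{a ∈ C} w(a) ≤ ℓ} be the set of budget-feasible outcomes (which is nonempty, as it contains ∅). Then for every profile B : Fin n → Finset A and every C ∈ F_ℓ: C maximizes ∑ᵢ |Bᵢ ∩ C| over F_ℓ if and only if C maximizes ∑ᵢ agree(σbal(Bᵢ), σout(C)) over F_ℓ, where σbal(B) = {(a, true) | a ∈ B} ∪ {(a, false) | a ∈ A} and σout(C) = {(a, true) | a ∈ C} ∪ {(a, false) | a ∈ C} are finite subsets of A × Bool and agreement is computed over A × Bool. Hence the participatory budgeting max rule with the cardinality satisfaction measure is an instance of the median rule (Proposition 2, first item). -/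
lemma agree_key {A : Type*} [Fintype A] [DecidableEq A] (B C : Finset A) :
    agree (sigBal B) (sigOut C) + B.card = Fintype.card A + 2 * (B ∩ C).card := by
  classical
  unfold agree sigBal sigOut
  simp only [Finset.mem_filter, Finset.mem_univ, true_and]
  have hB : B.card = ∑ a : A, (if a ∈ B then 1 else 0) := by
    rw [← Finset.sum_filter, Finset.sum_const, smul_eq_mul, mul_one,
      Finset.filter_univ_mem]
  have hBC : (B ∩ C).card = ∑ a : A, (if a ∈ B ∧ a ∈ C then 1 else 0) := by
    rw [← Finset.sum_filter, Finset.sum_const, smul_eq_mul, mul_one]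
    congr 1
    ext a
    simp [Finset.mem_filter]
  rw [Finset.card_filter, Fintype.sum_prod_type, hB, hBC, ← Finset.sum_add_distrib,
    Fintype.card, Finset.card_eq_sum_ones, Finset.mul_sum, ← Finset.sum_add_distrib]
  refine Finset.sum_congr rfl fun a _ => ?_
  rw [Fintype.sum_bool]
  by_cases hb : a ∈ B <;> by_cases hc : a ∈ C <;> simp [hb, hc]

/-- Proposition 2, first item: for the budget-feasible family `F_ℓ` (which is
nonempty, as it contains `∅`), an outcome `C ∈ F_ℓ` maximizes `∑ i, |B i ∩ C|` over
`F_ℓ` iff it maximizes `∑ i, agree(σbal(B i), σout(C))` over `F_ℓ`; the participatory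
budgeting max rule with the cardinality satisfaction measure is an instance of the
median rule. -/
theorem pb_max_rule_instance_of_median {A : Type*} [Fintype A] [DecidableEq A]
    (w : A → ℕ) (ℓ : ℕ) (Fl : Finset (Finset A))
    (hFl : Fl = Finset.univ.filter (fun C : Finset A => ∑ a ∈ C, w a ≤ ℓ))
    (n : ℕ) (B : Fin n → Finset A) :
    ∅ ∈ Fl ∧
    ∀ C ∈ Fl,
      ((∀ D ∈ Fl, ∑ i, (B i ∩ D).card ≤ ∑ i, (B i ∩ C).card) ↔
       (∀ D ∈ Fl, ∑ i, agree (sigBal (B i)) (sigOut D) ≤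
          ∑ i, agree (sigBal (B i)) (sigOut C))) := by
  have hkey : ∀ C : Finset A,
      ∑ i, agree (sigBal (B i)) (sigOut C) + ∑ i, (B i).card =
        n * Fintype.card A + 2 * ∑ i, (B i ∩ C).card := by
    intro C
    rw [← Finset.sum_add_distrib, Finset.mul_sum]
    have : ∀ i : Fin n, agree (sigBal (B i)) (sigOut C) + (B i).card =
        Fintype.card A + 2 * (B i ∩ C).card := fun i => agree_key (B i) C
    rw [Finset.sum_congr rfl fun i _ => this i, Finset.sum_add_distrib,
      Finset.sum_const, Finset.card_univ, Fintype.card_fin, smul_eq_mul]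
  refine ⟨by simp [hFl], fun C _ => ?_⟩
  constructor
  · intro h D hD
    have h1 := hkey D
    have h2 := hkey C
    have := h D hD
    omega
  · intro h D hD
    have h1 := hkey D
    have h2 := hkey C
    have := h D hD
    omega
end
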